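/- Let $0<\alpha<1/2$ and $0<\gamma<1-2\alpha$. Then there exists a constant $K>0$ (depending only on $\alpha$ and $\gamma$) such that for every real $x \geq 0$, $\sum_{k=1}^{\infty} \frac{\Gamma(k\gamma)}{\Gamma(k(1-2\alpha))} x^{k-1} \leq K \, e^{2 x^{1/(1-2\alpha-\gamma)}}$. In particular the series on the left-hand side converges for every $x \geq 0$. -/

import Mathlib

/-!
Write `δ = 1 - 2α - γ > 0` and `n = k + 1`. Log-convexity of `Γ` makes the Beta function
`Γ(a)Γ(b)/Γ(a+b)` antitone in each argument, so `Γ(nγ)/Γ(n(γ+δ)) ≤ B(γ,δ)/Γ(nδ)`. The integral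
representation gives `Γ(s) ≥ tˢ e⁻ᵗ / s` for every `t > 0`; choosing `t = 2u` with
`u = x^{1/δ} + 1 ≥ 1` turns `x^k / t^{nδ}` into at most `2^{-nδ}`, while `e^t = e² e^{2x^{1/δ}}`.
Hence the `k`-th term is at most `C n 2^{-nδ} e^{2x^{1/δ}}`, and `∑ n rⁿ = r/(1-r)²` for `r = 2^{-δ}`.
-/

open Real Set MeasureTheory

lemma ConvexOn.map_sub_le_map_add_sub {s : Set ℝ} {f : ℝ → ℝ} (hf : ConvexOn ℝ s f)
    {a a' b : ℝ} (ha : a ∈ s) (ha'b : a' + b ∈ s) (haa' : a ≤ a') (hb : 0 < b) :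
    f a' - f a ≤ f (a' + b) - f (a + b) := by
  set d := a' - a + b with hd_def
  have hd : 0 < d := by linarith
  have hθ : 0 ≤ b / d := by positivity
  have hθ' : 0 ≤ (a' - a) / d := div_nonneg (by linarith) hd.le
  have hθθ' : b / d + (a' - a) / d = 1 := by field_simp; rw [hd_def]; ring
  -- `a'` and `a + b` are the convex combinations of `a` and `a' + b` with the same two weights
  -- `b / d`, `(a' - a) / d` in either order; add the two convexity inequalities.
  have h₁ := hf.2 ha ha'b hθ hθ' hθθ'
  have h₂ := hf.2 ha ha'b hθ' hθ (by linarith)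
  have e₁ : (b / d) • a + ((a' - a) / d) • (a' + b) = a' := by
    simp only [smul_eq_mul]; field_simp; rw [hd_def]; ring
  have e₂ : ((a' - a) / d) • a + (b / d) • (a' + b) = a + b := by
    simp only [smul_eq_mul]; field_simp; rw [hd_def]; ring
  rw [e₁] at h₁
  rw [e₂] at h₂
  simp only [smul_eq_mul] at h₁ h₂
  linear_combination h₁ + h₂ + (f a + f (a' + b)) * hθθ'

lemma Real.Gamma_mul_Gamma_div_Gamma_add_le {a b a' b' : ℝ} (ha : 0 < a) (hb : 0 < b)
    (haa' : a ≤ a') (hbb' : b ≤ b') :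
    Gamma a' * Gamma b' / Gamma (a' + b') ≤ Gamma a * Gamma b / Gamma (a + b) := by
  have ha' : 0 < a' := ha.trans_le haa'
  have hb' : 0 < b' := hb.trans_le hbb'
  have h₁ : log (Gamma a') - log (Gamma a) ≤ log (Gamma (a' + b)) - log (Gamma (a + b)) :=
    convexOn_log_Gamma.map_sub_le_map_add_sub (f := log ∘ Gamma) ha
      (show 0 < a' + b by linarith) haa' hb
  have h₂ : log (Gamma b') - log (Gamma b) ≤ log (Gamma (a' + b')) - log (Gamma (a' + b)) := by
    rw [add_comm a' b', add_comm a' b]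
    exact convexOn_log_Gamma.map_sub_le_map_add_sub (f := log ∘ Gamma) hb
      (show 0 < b' + a' by linarith) hbb' ha'
  rw [← log_le_log_iff (by positivity) (by positivity), log_div (by positivity) (by positivity),
    log_div (by positivity) (by positivity), log_mul (by positivity) (by positivity),
    log_mul (by positivity) (by positivity)]
  linarith

lemma Real.rpow_mul_exp_neg_le_Gamma_add_one {s t : ℝ} (hs : 0 ≤ s) (ht : 0 ≤ t) :
    t ^ s * exp (-t) ≤ Gamma (s + 1) := by
  have hint : IntegrableOn (fun x => exp (-x) * x ^ s) (Ioi 0) := by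
    simpa using GammaIntegral_convergent (s := s + 1) (by linarith)
  rw [Gamma_eq_integral (by linarith), add_sub_cancel_right]
  calc t ^ s * exp (-t) = ∫ x in Ioi t, exp (-x) * t ^ s := by
        rw [integral_mul_const, integral_exp_neg_Ioi, mul_comm]
    _ ≤ ∫ x in Ioi t, exp (-x) * x ^ s := by
        refine setIntegral_mono_on ((integrableOn_exp_neg_Ioi t).mul_const _)
          (hint.mono_set (Ioi_subset_Ioi ht)) measurableSet_Ioi fun x hx => ?_
        gcongr
        exact hx.le
    _ ≤ ∫ x in Ioi 0, exp (-x) * x ^ s := by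
        refine setIntegral_mono_set hint ?_ (Ioi_subset_Ioi ht).eventuallyLE
        filter_upwards [ae_restrict_mem measurableSet_Ioi] with x hx
        exact mul_nonneg (exp_pos _).le (rpow_nonneg (le_of_lt hx) _)

lemma Real.inv_Gamma_le {s t : ℝ} (hs : 0 < s) (ht : 0 < t) :
    (Gamma s)⁻¹ ≤ s * exp t / t ^ s := by
  have h := rpow_mul_exp_neg_le_Gamma_add_one hs.le ht.le
  rw [Gamma_add_one hs.ne', exp_neg] at h
  rw [inv_le_comm₀ (by positivity) (by positivity), inv_div, div_le_iff₀ (by positivity)]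
  calc t ^ s = t ^ s * (exp t)⁻¹ * exp t := by field_simp
    _ ≤ s * Gamma s * exp t := by gcongr
    _ = Gamma s * (s * exp t) := by ring

lemma Gamma_mul_div_Gamma_mul_add_le {γ δ n t : ℝ} (hγ : 0 < γ) (hδ : 0 < δ) (hn : 1 ≤ n)
    (ht : 0 < t) :
    Gamma (n * γ) / Gamma (n * (γ + δ)) ≤
      Gamma γ * Gamma δ / Gamma (γ + δ) * (n * δ * exp t / t ^ (n * δ)) := by
  have hΓ : 0 < Gamma (n * δ) := Gamma_pos_of_pos (by positivity)
  have hbeta : Gamma (n * γ) * Gamma (n * δ) / Gamma (n * (γ + δ)) ≤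
      Gamma γ * Gamma δ / Gamma (γ + δ) := by
    rw [mul_add]
    exact Gamma_mul_Gamma_div_Gamma_add_le hγ hδ (le_mul_of_one_le_left hγ.le hn)
      (le_mul_of_one_le_left hδ.le hn)
  calc Gamma (n * γ) / Gamma (n * (γ + δ))
      = Gamma (n * γ) * Gamma (n * δ) / Gamma (n * (γ + δ)) * (Gamma (n * δ))⁻¹ := by
        field_simp
    _ ≤ _ := by
        have := Gamma_pos_of_pos (add_pos hγ hδ)
        gcongr
        exact inv_Gamma_le (by positivity) ht

lemma Gamma_div_Gamma_mul_pow_le {γ β x : ℝ} (hγ : 0 < γ) (hγβ : γ < β) (hx : 0 ≤ x) (k : ℕ) :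
    Gamma ((k + 1 : ℕ) * γ) / Gamma ((k + 1 : ℕ) * β) * x ^ k ≤
      Gamma γ * Gamma (β - γ) / Gamma β * (β - γ) * exp 2 *
        (((k + 1 : ℕ) : ℝ) * ((2 : ℝ) ^ (-(β - γ))) ^ (k + 1)) *
        exp (2 * x ^ ((1 : ℝ) / (β - γ))) := by
  set δ := β - γ
  set n : ℝ := ((k + 1 : ℕ) : ℝ) with hn_def
  set u := x ^ ((1 : ℝ) / δ) + 1 with hu_def
  have hδ : 0 < δ := sub_pos.2 hγβ
  have hu : 1 ≤ u := le_add_of_nonneg_left (rpow_nonneg hx _)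
  have hratio : Gamma (n * γ) / Gamma (n * β) ≤
      Gamma γ * Gamma δ / Gamma β * (n * δ * exp (2 * u) / (2 * u) ^ (n * δ)) := by
    have := Gamma_mul_div_Gamma_mul_add_le (n := n) hγ hδ (Nat.one_le_cast.2 k.succ_pos)
      (by positivity : 0 < 2 * u)
    rwa [add_sub_cancel] at this
  have hx_le : x ≤ u ^ δ := by
    calc x = (x ^ ((1 : ℝ) / δ)) ^ δ := by rw [← rpow_mul hx, one_div_mul_cancel hδ.ne', rpow_one]
      _ ≤ u ^ δ := by gcongr; linarith
  have hxk : x ^ k ≤ (u ^ δ) ^ (k + 1) :=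
    (pow_le_pow_left₀ hx hx_le k).trans (pow_le_pow_right₀ (one_le_rpow hu hδ.le) k.le_succ)
  have hpow : (2 * u) ^ (n * δ) = ((2 : ℝ) ^ δ) ^ (k + 1) * (u ^ δ) ^ (k + 1) := by
    rw [mul_comm n, hn_def, rpow_mul_natCast (by positivity), mul_rpow (by norm_num) (by linarith),
      mul_pow]
  have hexp : exp (2 * u) = exp 2 * exp (2 * x ^ ((1 : ℝ) / δ)) := by
    rw [← exp_add, hu_def]; ring_nf
  calc Gamma (n * γ) / Gamma (n * β) * x ^ k
      ≤ Gamma γ * Gamma δ / Gamma β * (n * δ * exp (2 * u) / (2 * u) ^ (n * δ)) *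
          (u ^ δ) ^ (k + 1) := by
        have := Gamma_pos_of_pos (hγ.trans hγβ)
        have := Gamma_pos_of_pos hδ
        gcongr
    _ = _ := by
        rw [hpow, hexp, rpow_neg zero_le_two, inv_pow]
        have : (u ^ δ) ^ (k + 1) ≠ 0 := by positivity
        field_simp

theorem stmt_1_general (α γ : ℝ) (hγ : 0 < γ) (hγ' : γ < 1 - 2*α) :
    ∃ K : ℝ, 0 < K ∧ ∀ x : ℝ, 0 ≤ x →
      Summable (fun k : ℕ =>
        Gamma ((k+1 : ℕ) * γ) / Gamma ((k+1 : ℕ) * (1 - 2*α)) * x ^ k) ∧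
      ∑' k : ℕ, Gamma ((k+1 : ℕ) * γ) / Gamma ((k+1 : ℕ) * (1 - 2*α)) * x ^ k
        ≤ K * exp (2 * x ^ ((1:ℝ)/(1 - 2*α - γ))) := by
  have hδ : 0 < 1 - 2*α - γ := by linarith
  set r : ℝ := 2 ^ (-(1 - 2*α - γ))
  have hr₀ : 0 < r := by positivity
  have hr₁ : r < 1 := rpow_lt_one_of_one_lt_of_neg (by norm_num) (by linarith)
  set C := Gamma γ * Gamma (1 - 2*α - γ) / Gamma (1 - 2*α) * (1 - 2*α - γ) * exp 2
  have hβ : 0 < 1 - 2*α := by linarith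
  have hgeom : HasSum (fun k : ℕ => ((k + 1 : ℕ) : ℝ) * r ^ (k + 1)) (r / (1 - r) ^ 2) := by
    have := (hasSum_nat_add_iff' (f := fun n : ℕ => (n : ℝ) * r ^ n) 1).2
      (hasSum_coe_mul_geometric_of_norm_lt_one (by rwa [norm_of_nonneg hr₀.le]))
    simpa using this
  have hC : 0 < C := by positivity
  refine ⟨C * (r / (1 - r) ^ 2), by have := sub_pos.2 hr₁; positivity, fun x hx => ?_⟩
  have hterm := Gamma_div_Gamma_mul_pow_le hγ hγ' hx
  have hbound := (hgeom.mul_left C).mul_right (exp (2 * x ^ ((1:ℝ)/(1 - 2*α - γ))))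
  have hsum := hbound.summable.of_nonneg_of_le
    (fun k => mul_nonneg (div_nonneg (Gamma_nonneg_of_nonneg (by positivity))
      (Gamma_nonneg_of_nonneg (mul_nonneg (by positivity) hβ.le))) (pow_nonneg hx k)) hterm
  exact ⟨hsum, (hsum.tsum_le_tsum hterm hbound.summable).trans_eq hbound.tsum_eq⟩

/-- Estimate for the full Mittag-Leffler-type series `∑_{k≥1} Γ(kγ)/Γ(k(1-2α)) x^{k-1}`. -/
theorem stmt_1 (α γ : ℝ) (hα : 0 < α) (hα' : α < 1/2) (hγ : 0 < γ) (hγ' : γ < 1 - 2*α) :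
    ∃ K : ℝ, 0 < K ∧ ∀ x : ℝ, 0 ≤ x →
      Summable (fun k : ℕ =>
        Gamma ((k+1 : ℕ) * γ) / Gamma ((k+1 : ℕ) * (1 - 2*α)) * x ^ k) ∧
      ∑' k : ℕ, Gamma ((k+1 : ℕ) * γ) / Gamma ((k+1 : ℕ) * (1 - 2*α)) * x ^ k
        ≤ K * exp (2 * x ^ ((1:ℝ)/(1 - 2*α - γ))) :=
  stmt_1_general α γ hγ hγ'
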